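/- Suppose τ_0, τ_1 are real constants and ϱ, ℓ_1 : (0,∞) → ℝ are functions with ℓ_1 twice differentiable and nowhere vanishing, satisfying for all λ > 0 (with ' = d/dλ): 4 ϱ(λ) ℓ_1(λ)² = −( (ℓ_1²)''(λ) − 3 ℓ_1'(λ)² + τ_0 ) and ℓ_1(λ)² − (λ ℓ_1(λ))'' + 3 ℓ_1'(λ) − 4 ϱ(λ) λ ℓ_1(λ) = τ_1. Then ℓ_1 satisfies the Painlevé III equation ℓ_1''(λ) = ℓ_1'(λ)²/ℓ_1(λ) − ℓ_1'(λ)/λ − ℓ_1(λ)²/λ − τ_0/ℓ_1(λ) + τ_1/λ for all λ > 0. -/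

import Mathlib

open Filter Topology

section SecondDerivatives

variable {𝕜 : Type*} [NontriviallyNormedField 𝕜] {f : 𝕜 → 𝕜} {x : 𝕜}

theorem deriv_deriv_sq (hf : ∀ᶠ y in 𝓝 x, DifferentiableAt 𝕜 f y)
    (hf' : DifferentiableAt 𝕜 (deriv f) x) :
    deriv (deriv fun t => f t ^ 2) x = 2 * deriv f x ^ 2 + 2 * f x * deriv (deriv f) x := by
  have hderiv : deriv (fun t => f t ^ 2) =ᶠ[𝓝 x] fun t => 2 * f t * deriv f t :=
    hf.mono fun y hy => (hy.hasDerivAt.pow 2).deriv.trans (by push_cast; ring)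
  rw [hderiv.deriv_eq]
  exact ((hf.self_of_nhds.hasDerivAt.const_mul 2).mul hf'.hasDerivAt).deriv.trans (by ring)

theorem deriv_deriv_id_mul (hf : ∀ᶠ y in 𝓝 x, DifferentiableAt 𝕜 f y)
    (hf' : DifferentiableAt 𝕜 (deriv f) x) :
    deriv (deriv fun t => t * f t) x = 2 * deriv f x + x * deriv (deriv f) x := by
  have hderiv : deriv (fun t => t * f t) =ᶠ[𝓝 x] fun t => f t + t * deriv f t :=
    hf.mono fun y hy => ((hasDerivAt_id' y).mul hy.hasDerivAt).deriv.trans (by ring)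
  rw [hderiv.deriv_eq]
  exact (hf.self_of_nhds.hasDerivAt.add ((hasDerivAt_id' x).mul hf'.hasDerivAt)).deriv.trans
    (by ring)

end SecondDerivatives

theorem painleve_III_hierarchy_k_one (τ0 τ1 : ℝ) (ϱ ℓ1 : ℝ → ℝ)
    (hdiff : ∀ l ∈ Set.Ioi (0 : ℝ), DifferentiableAt ℝ ℓ1 l)
    (hdiff2 : ∀ l ∈ Set.Ioi (0 : ℝ), DifferentiableAt ℝ (deriv ℓ1) l)
    (hne : ∀ l ∈ Set.Ioi (0 : ℝ), ℓ1 l ≠ 0)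
    (h0 : ∀ l ∈ Set.Ioi (0 : ℝ),
      4 * ϱ l * ℓ1 l ^ 2 =
        -(deriv (deriv (fun t => ℓ1 t ^ 2)) l - 3 * (deriv ℓ1 l) ^ 2 + τ0))
    (h1 : ∀ l ∈ Set.Ioi (0 : ℝ),
      ℓ1 l ^ 2 - deriv (deriv (fun t => t * ℓ1 t)) l + 3 * deriv ℓ1 l
        - 4 * ϱ l * l * ℓ1 l = τ1) :
    ∀ l ∈ Set.Ioi (0 : ℝ),
      deriv (deriv ℓ1) l =
        (deriv ℓ1 l) ^ 2 / ℓ1 l - deriv ℓ1 l / l - ℓ1 l ^ 2 / l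
          - τ0 / ℓ1 l + τ1 / l := by
  intro l hl
  have hnear : ∀ᶠ t in 𝓝 l, DifferentiableAt ℝ ℓ1 t :=
    eventually_of_mem (Ioi_mem_nhds hl) hdiff
  have hp0 := h0 l hl
  have hp1 := h1 l hl
  rw [deriv_deriv_sq hnear (hdiff2 l hl)] at hp0
  rw [deriv_deriv_id_mul hnear (hdiff2 l hl)] at hp1
  have hl0 : l ≠ 0 := ne_of_gt hl
  have hℓ0 := hne l hl
  -- multiplying the p = 1 equation by ℓ₁ lets the p = 0 equation eliminate ϱ
  field_simp
  linear_combination ℓ1 l * hp1 + l * hp0
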